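/- (Rubio de Francia iteration algorithm.) For any $p \in (1,\infty)$ and any weight $w \in A_p$ on $\mathbb{R}^n$, there exists a sublinear operator $\mathcal{R}: L^p(w) \to L^p(w)$ such that for every nonnegative $h \in L^p(w)$: (a) $h \le \mathcal{R}h$ pointwise a.e.; (b) $\|\mathcal{R}h\|_{L^p(w)} \le 2\|h\|_{L^p(w)}$; (c) $\mathcal{R}h \in A_1$ with $[\mathcal{R}h]_{A_1} \le 2\|M\|_{L^p(w)\to L^p(w)}$. -/

import Mathlib

/-!
Rubio de Francia's operator is `ℛh = ∑ₖ Mᵏh / (2‖M‖)ᵏ`. Since `‖Mᵏh‖ ≤ ‖M‖ᵏ ‖h‖`, Minkowski's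
inequality for series bounds `‖ℛh‖` by `∑ₖ 2⁻ᵏ ‖h‖ = 2 ‖h‖`. Sublinearity of `M` shifts the series
by one step: `M(ℛh) ≤ ∑ₖ Mᵏ⁺¹h / (2‖M‖)ᵏ ≤ 2‖M‖ ℛh`, which bounds the `A₁` constant of `ℛh`.
A weight is positive a.e., so `‖M‖ > 0`; when `‖M‖ = ∞` the identity operator already works.
-/

open MeasureTheory ENNReal

noncomputable section

/-- A (closed, axis-parallel) cube in `ℝⁿ`. -/
def IsCube {n : ℕ} (Q : Set (Fin n → ℝ)) : Prop :=
  ∃ (c : Fin n → ℝ) (r : ℝ), 0 < r ∧ Q = {x | ∀ i, |x i - c i| ≤ r}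

/-- Average `⨍_Q w` of an `ℝ≥0∞`-valued function over a set. -/
def avgE {n : ℕ} (Q : Set (Fin n → ℝ)) (w : (Fin n → ℝ) → ℝ≥0∞) : ℝ≥0∞ :=
  (∫⁻ x in Q, w x) / volume Q

/-- The `A_p` constant, `1 < p < ∞`. -/
def apSup {n : ℕ} (p : ℝ) (w : (Fin n → ℝ) → ℝ≥0∞) : ℝ≥0∞ :=
  ⨆ (Q : Set (Fin n → ℝ)) (_ : IsCube Q),
    avgE Q w * (avgE Q fun x => w x ^ (-(1 / (p - 1)))) ^ (p - 1)

/-- The `A_1` constant. -/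
def a1Const {n : ℕ} (w : (Fin n → ℝ) → ℝ≥0∞) : ℝ≥0∞ :=
  ⨆ (Q : Set (Fin n → ℝ)) (_ : IsCube Q),
    avgE Q w * essSup (fun x => (w x)⁻¹) (volume.restrict Q)

/-- The Muckenhoupt `A_p` constant for `1 ≤ p < ∞`. -/
def apConst {n : ℕ} (p : ℝ) (w : (Fin n → ℝ) → ℝ≥0∞) : ℝ≥0∞ :=
  if p = 1 then a1Const w else apSup p w

/-- The `A_∞` constant, `[w]_{A_∞} = inf_{p>1} [w]_{A_p}`. -/
def aInftyConst {n : ℕ} (w : (Fin n → ℝ) → ℝ≥0∞) : ℝ≥0∞ :=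
  ⨅ (p : ℝ) (_ : 1 < p), apConst p w

/-- The reverse Hölder constant, `1 ≤ s < ∞`. -/
def rhConst {n : ℕ} (s : ℝ) (w : (Fin n → ℝ) → ℝ≥0∞) : ℝ≥0∞ :=
  ⨆ (Q : Set (Fin n → ℝ)) (_ : IsCube Q),
    (avgE Q fun x => w x ^ s) ^ (1 / s) / avgE Q w

/-- The reverse Hölder constant for an exponent `s ∈ [1,∞]`. -/
def rhConstE {n : ℕ} (s : ℝ≥0∞) (w : (Fin n → ℝ) → ℝ≥0∞) : ℝ≥0∞ :=
  if s = ∞ then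
    ⨆ (Q : Set (Fin n → ℝ)) (_ : IsCube Q),
      essSup w (volume.restrict Q) / avgE Q w
  else rhConst s.toReal w

/-- A weight on `ℝⁿ`: measurable, positive and finite a.e. -/
def IsWeight {n : ℕ} (w : (Fin n → ℝ) → ℝ≥0∞) : Prop :=
  Measurable w ∧ ∀ᵐ x ∂(volume : Measure (Fin n → ℝ)), 0 < w x ∧ w x < ∞

/-- The conjugate exponent `p' = p/(p-1)` of a real exponent. -/
def rconj (p : ℝ) : ℝ := p / (p - 1)

/-- The conjugate exponent of an extended-real exponent, with `1' = ∞`, `∞' = 1`. -/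
def econj (p : ℝ≥0∞) : ℝ≥0∞ :=
  if p = ∞ then 1 else if p ≤ 1 then ∞ else ENNReal.ofReal (p.toReal / (p.toReal - 1))

/-- The limited-range exponent `τ_p = (𝔭₊/p)'(p/𝔭₋ - 1) + 1`. -/
def tauExp (pm : ℝ) (pp : ℝ≥0∞) (p : ℝ) : ℝ :=
  (econj (pp / ENNReal.ofReal p)).toReal * (p / pm - 1) + 1

/-- The (uncentered) Hardy–Littlewood maximal function over cubes. -/
def maximalFn {n : ℕ} (f : (Fin n → ℝ) → ℝ≥0∞) (x : Fin n → ℝ) : ℝ≥0∞ :=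
  ⨆ (Q : Set (Fin n → ℝ)) (_ : IsCube Q) (_ : x ∈ Q), avgE Q f

/-- The operator norm of the maximal operator on `L^p(w)`. -/
def maximalOpNorm {n : ℕ} (p : ℝ) (w : (Fin n → ℝ) → ℝ≥0∞) : ℝ≥0∞ :=
  ⨆ (f : (Fin n → ℝ) → ℝ≥0∞) (_ : (∫⁻ x, f x ^ p * w x) ≤ 1),
    (∫⁻ x, maximalFn f x ^ p * w x) ^ (1/p)

open Set Filter Topology Metric

section Cubes

variable {n : ℕ}

theorem cube_eq_closedBall (c : Fin n → ℝ) {r : ℝ} (hr : 0 ≤ r) :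
    {x : Fin n → ℝ | ∀ i, |x i - c i| ≤ r} = closedBall c r := by
  ext x
  simp only [mem_ofPred_eq, mem_closedBall, dist_pi_le_iff hr, Real.dist_eq]

theorem isCube_closedBall (c : Fin n → ℝ) {r : ℝ} (hr : 0 < r) : IsCube (closedBall c r) :=
  ⟨c, r, hr, (cube_eq_closedBall c hr.le).symm⟩

theorem IsCube.exists_eq_closedBall {Q : Set (Fin n → ℝ)} (hQ : IsCube Q) :
    ∃ c r, 0 < r ∧ Q = closedBall c r := by
  obtain ⟨c, r, hr, rfl⟩ := hQ
  exact ⟨c, r, hr, cube_eq_closedBall c hr.le⟩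

theorem IsCube.measurableSet {Q : Set (Fin n → ℝ)} (hQ : IsCube Q) : MeasurableSet Q := by
  obtain ⟨c, r, -, rfl⟩ := hQ.exists_eq_closedBall
  exact measurableSet_closedBall

theorem IsCube.volume_pos {Q : Set (Fin n → ℝ)} (hQ : IsCube Q) : 0 < volume Q := by
  obtain ⟨c, r, hr, rfl⟩ := hQ.exists_eq_closedBall
  rw [Real.volume_pi_closedBall c hr.le, ENNReal.ofReal_pos]
  positivity

theorem IsCube.volume_ne_top {Q : Set (Fin n → ℝ)} (hQ : IsCube Q) : volume Q ≠ ∞ := by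
  obtain ⟨c, r, -, rfl⟩ := hQ.exists_eq_closedBall
  exact measure_closedBall_lt_top.ne

end Cubes

section MaximalFunction

variable {n : ℕ}

theorem avgE_le_maximalFn (f : (Fin n → ℝ) → ℝ≥0∞) {Q : Set (Fin n → ℝ)} (hQ : IsCube Q)
    {x : Fin n → ℝ} (hx : x ∈ Q) : avgE Q f ≤ maximalFn f x :=
  le_iSup₂_of_le Q hQ (le_iSup_of_le hx le_rfl)

theorem maximalFn_le_of_forall_avgE_le {f : (Fin n → ℝ) → ℝ≥0∞} {x : Fin n → ℝ} {a : ℝ≥0∞}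
    (h : ∀ Q, IsCube Q → x ∈ Q → avgE Q f ≤ a) : maximalFn f x ≤ a :=
  iSup₂_le fun Q hQ => iSup_le (h Q hQ)

/-- Enlarging a cube slightly changes the average only slightly, and the enlarged cube contains a
neighbourhood of every point of the original one. -/
theorem lowerSemicontinuous_maximalFn (f : (Fin n → ℝ) → ℝ≥0∞) :
    LowerSemicontinuous (maximalFn f) := by
  intro x t ht
  simp only [maximalFn, lt_iSup_iff] at ht
  obtain ⟨Q, hQ, hxQ, htQ⟩ := ht
  obtain ⟨c, r, hr, rfl⟩ := hQ.exists_eq_closedBall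
  set I := ∫⁻ y in closedBall c r, f y
  have hvol : ∀ s, 0 ≤ s → volume (closedBall c s) = ENNReal.ofReal ((2 * s) ^ n) := fun s hs => by
    simpa using Real.volume_pi_closedBall c hs
  have hlim : Tendsto (fun s : ℝ => I / ENNReal.ofReal ((2 * s) ^ n)) (𝓝 r)
      (𝓝 (avgE (closedBall c r) f)) := by
    rw [avgE, hvol r hr.le]
    refine ENNReal.Tendsto.const_div ?_ (Or.inl ENNReal.ofReal_ne_top)
    exact (ENNReal.continuous_ofReal.comp (by fun_prop)).tendsto r
  have hev : ∀ᶠ s in 𝓝[>] r, t < I / ENNReal.ofReal ((2 * s) ^ n) :=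
    nhdsWithin_le_nhds (hlim.eventually_const_lt htQ)
  obtain ⟨s, hts, hrs⟩ := (hev.and self_mem_nhdsWithin).exists
  have hs : 0 < s := hr.trans hrs
  have htavg : t < avgE (closedBall c s) f := by
    refine hts.trans_le ?_
    rw [avgE, hvol s hs.le]
    exact ENNReal.div_le_div_right (lintegral_mono_set (closedBall_subset_closedBall hrs.le)) _
  filter_upwards [ball_mem_nhds x (sub_pos.2 hrs)] with y hy
  refine htavg.trans_le (avgE_le_maximalFn f (isCube_closedBall c hs) ?_)
  rw [mem_closedBall] at hxQ ⊢
  linarith [dist_triangle y x c, mem_ball.1 hy]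

theorem measurable_maximalFn (f : (Fin n → ℝ) → ℝ≥0∞) : Measurable (maximalFn f) :=
  (lowerSemicontinuous_maximalFn f).measurable

end MaximalFunction

section Sublinearity

variable {n : ℕ} {Q : Set (Fin n → ℝ)}

theorem avgE_add_of_measurable_right (f : (Fin n → ℝ) → ℝ≥0∞) {g : (Fin n → ℝ) → ℝ≥0∞}
    (hg : Measurable g) : avgE Q (fun y => f y + g y) = avgE Q f + avgE Q g := by
  rw [avgE, lintegral_add_right' f hg.aemeasurable, ENNReal.add_div, avgE, avgE]

theorem avgE_tsum {g : ℕ → (Fin n → ℝ) → ℝ≥0∞} (hg : ∀ k, Measurable (g k)) :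
    avgE Q (fun y => ∑' k, g k y) = ∑' k, avgE Q (g k) := by
  simp only [avgE, lintegral_tsum fun k => (hg k).aemeasurable, div_eq_mul_inv,
    ENNReal.tsum_mul_right]

theorem avgE_const_mul (f : (Fin n → ℝ) → ℝ≥0∞) {c : ℝ≥0∞} (hc : c ≠ ∞) :
    avgE Q (fun y => c * f y) = c * avgE Q f := by
  rw [avgE, lintegral_const_mul' c f hc, mul_div_assoc, avgE]

theorem maximalFn_add_le (f : (Fin n → ℝ) → ℝ≥0∞) {g : (Fin n → ℝ) → ℝ≥0∞}
    (hg : Measurable g) (x : Fin n → ℝ) :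
    maximalFn (fun y => f y + g y) x ≤ maximalFn f x + maximalFn g x :=
  maximalFn_le_of_forall_avgE_le fun Q hQ hx => by
    rw [avgE_add_of_measurable_right f hg]
    exact add_le_add (avgE_le_maximalFn f hQ hx) (avgE_le_maximalFn g hQ hx)

theorem maximalFn_tsum_le {g : ℕ → (Fin n → ℝ) → ℝ≥0∞} (hg : ∀ k, Measurable (g k))
    (x : Fin n → ℝ) : maximalFn (fun y => ∑' k, g k y) x ≤ ∑' k, maximalFn (g k) x :=
  maximalFn_le_of_forall_avgE_le fun Q hQ hx => by
    rw [avgE_tsum hg]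
    exact ENNReal.tsum_le_tsum fun k => avgE_le_maximalFn (g k) hQ hx

theorem maximalFn_const_mul (f : (Fin n → ℝ) → ℝ≥0∞) {c : ℝ≥0∞} (hc : c ≠ ∞)
    (x : Fin n → ℝ) : maximalFn (fun y => c * f y) x = c * maximalFn f x := by
  simp only [maximalFn, avgE_const_mul f hc, ENNReal.mul_iSup]

theorem a1Const_le_of_maximalFn_le {u : (Fin n → ℝ) → ℝ≥0∞} {C : ℝ≥0∞}
    (h : ∀ x, maximalFn u x ≤ C * u x) : a1Const u ≤ C := by
  refine iSup₂_le fun Q hQ => ?_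
  rw [← ENNReal.essSup_const_mul]
  refine essSup_le_of_ae_le _ ?_
  filter_upwards [ae_restrict_mem hQ.measurableSet] with x hx
  exact ENNReal.div_le_of_le_mul ((avgE_le_maximalFn u hQ hx).trans (h x))

end Sublinearity

section Lintegral

variable {α : Type*} [MeasurableSpace α] {μ : Measure α} {q : ℝ}

theorem setLIntegral_pos_of_ae_pos {f : α → ℝ≥0∞} (hf : Measurable f) {s : Set α}
    (hs : MeasurableSet s) (hμs : μ s ≠ 0)
    (hpos : ∀ᵐ x ∂μ, x ∈ s → 0 < f x) : 0 < ∫⁻ x in s, f x ∂μ := by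
  refine pos_iff_ne_zero.2 fun h0 => hμs (measure_eq_zero_iff_ae_notMem.2 ?_)
  filter_upwards [(setLIntegral_eq_zero_iff hs hf).1 h0, hpos] with x hx hxpos hxs
  exact (hxpos hxs).ne' (hx hxs)

theorem eLpNorm'_const_mul (f : α → ℝ≥0∞) {c : ℝ≥0∞} (hc : c ≠ ∞) (hq : 0 < q) :
    eLpNorm' (fun x => c * f x) q μ = c * eLpNorm' f q μ := by
  simp only [eLpNorm'_eq_lintegral_enorm, enorm_eq_self, ENNReal.mul_rpow_of_nonneg _ _ hq.le]
  rw [lintegral_const_mul' _ _ (ENNReal.rpow_ne_top_of_nonneg hq.le hc),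
    ENNReal.mul_rpow_of_nonneg _ _ (by positivity), ← ENNReal.rpow_mul, mul_one_div_cancel hq.ne',
    ENNReal.rpow_one]

/-- Replace `f + g` by a measurable minorant `ψ` with the same `L^q` norm, and apply Minkowski's
inequality to `(ψ - g) + g`. -/
theorem eLpNorm'_add_le_of_measurable_right (f : α → ℝ≥0∞) {g : α → ℝ≥0∞} (hg : Measurable g)
    (hq : 1 ≤ q) :
    eLpNorm' (fun x => f x + g x) q μ ≤ eLpNorm' f q μ + eLpNorm' g q μ := by
  have hq0 : 0 < q := one_pos.trans_le hq
  obtain ⟨φ, hφm, hφle, hφeq⟩ := exists_measurable_le_lintegral_eq μ fun x => (f x + g x) ^ q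
  set ψ : α → ℝ≥0∞ := fun x => φ x ^ (1 / q)
  have hψq : ∀ x, ψ x ^ q = φ x := fun x => by
    rw [← ENNReal.rpow_mul, one_div_mul_cancel hq0.ne', ENNReal.rpow_one]
  have hψle : ∀ x, ψ x ≤ f x + g x := fun x => by
    have h := ENNReal.rpow_le_rpow (hφle x) (by positivity : 0 ≤ 1 / q)
    rwa [← ENNReal.rpow_mul, mul_one_div_cancel hq0.ne', ENNReal.rpow_one] at h
  have hψ : eLpNorm' (fun x => f x + g x) q μ = eLpNorm' ψ q μ := by
    simp only [eLpNorm'_eq_lintegral_enorm, enorm_eq_self, hψq, hφeq]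
  calc eLpNorm' (fun x => f x + g x) q μ
      = eLpNorm' ψ q μ := hψ
    _ ≤ eLpNorm' (fun x => (ψ x - g x) + g x) q μ :=
        eLpNorm'_mono_enorm_ae hq0.le (.of_forall fun x => by simpa using le_tsub_add)
    _ ≤ eLpNorm' (fun x => ψ x - g x) q μ + eLpNorm' g q μ :=
        eLpNorm'_add_le ((Measurable.pow_const hφm _).sub hg).aestronglyMeasurable
          hg.aestronglyMeasurable hq
    _ ≤ eLpNorm' f q μ + eLpNorm' g q μ := by
        gcongr
        exact eLpNorm'_mono_enorm_ae hq0.le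
          (.of_forall fun x => by simpa using tsub_le_iff_right.2 (hψle x))

theorem eLpNorm'_tsum_le {g : ℕ → α → ℝ≥0∞} (hg : ∀ k, Measurable (g k)) (hq : 1 ≤ q) :
    eLpNorm' (fun x => ∑' k, g k x) q μ ≤ ∑' k, eLpNorm' (g k) q μ := by
  have hq0 : 0 < q := one_pos.trans_le hq
  have hmono : Monotone fun K x => (∑ k ∈ Finset.range K, g k x) ^ q := fun a b hab x =>
    ENNReal.rpow_le_rpow (Finset.sum_le_sum_of_subset (Finset.range_subset_range.2 hab)) hq0.le
  have hpartial : ∀ K, eLpNorm' (fun x => ∑ k ∈ Finset.range K, g k x) q μ ≤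
      ∑' k, eLpNorm' (g k) q μ := fun K => by
    rw [← Finset.sum_fn]
    exact (eLpNorm'_sum_le (fun k _ => (hg k).aestronglyMeasurable) hq).trans
      (ENNReal.sum_le_tsum _)
  have hsup : ∀ x, (∑' k, g k x) ^ q = ⨆ K, (∑ k ∈ Finset.range K, g k x) ^ q := fun x => by
    rw [ENNReal.tsum_eq_iSup_nat]
    exact (ENNReal.orderIsoRpow q hq0).map_iSup _
  calc eLpNorm' (fun x => ∑' k, g k x) q μ
      = ⨆ K, eLpNorm' (fun x => ∑ k ∈ Finset.range K, g k x) q μ := by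
        simp only [eLpNorm'_eq_lintegral_enorm, enorm_eq_self, hsup]
        rw [lintegral_iSup (fun K => (Finset.measurable_sum _ fun k _ => hg k).pow_const q) hmono]
        exact (ENNReal.orderIsoRpow (1 / q) (by positivity)).map_iSup _
    _ ≤ ∑' k, eLpNorm' (g k) q μ := iSup_le hpartial

end Lintegral

section OperatorNorm

variable {n : ℕ} {p : ℝ} {w : (Fin n → ℝ) → ℝ≥0∞}

theorem IsWeight.eLpNorm'_withDensity (hw : IsWeight w) (f : (Fin n → ℝ) → ℝ≥0∞) :
    eLpNorm' f p (volume.withDensity w) = (∫⁻ x, f x ^ p * w x) ^ (1 / p) := by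
  rw [eLpNorm'_eq_lintegral_enorm,
    lintegral_withDensity_eq_lintegral_mul_non_measurable _ hw.1 (hw.2.mono fun x hx => hx.2)]
  simp only [enorm_eq_self, Pi.mul_apply, mul_comm]

theorem eLpNorm'_maximalFn_le_maximalOpNorm (hw : IsWeight w) (hp : 0 < p)
    {f : (Fin n → ℝ) → ℝ≥0∞} (hf : eLpNorm' f p (volume.withDensity w) ≤ 1) :
    eLpNorm' (maximalFn f) p (volume.withDensity w) ≤ maximalOpNorm p w := by
  rw [hw.eLpNorm'_withDensity] at hf ⊢
  refine le_iSup₂_of_le f ?_ le_rfl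
  rw [← ENNReal.one_rpow (1 / p)] at hf
  exact (ENNReal.rpow_le_rpow_iff (by positivity)).1 hf

/-- Homogeneity of `M` turns the defining supremum over the unit ball into the operator bound;
the `ε` makes room for functions of norm zero. -/
theorem eLpNorm'_maximalFn_le (hw : IsWeight w) (hp : 0 < p) (hM : maximalOpNorm p w ≠ ∞)
    {f : (Fin n → ℝ) → ℝ≥0∞} (hf : eLpNorm' f p (volume.withDensity w) ≠ ∞) :
    eLpNorm' (maximalFn f) p (volume.withDensity w) ≤
      maximalOpNorm p w * eLpNorm' f p (volume.withDensity w) := by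
  set μ := volume.withDensity w
  set C := maximalOpNorm p w
  set N := eLpNorm' f p μ
  have hε : ∀ ε : ℝ≥0∞, 0 < ε → ε ≠ ∞ → eLpNorm' (maximalFn f) p μ ≤ C * (N + ε) := by
    intro ε hε0 hεt
    have hNε : N + ε ≠ 0 := (hε0.trans_le le_add_self).ne'
    have hc : (N + ε)⁻¹ ≠ ∞ := ENNReal.inv_ne_top.2 hNε
    have hcf : eLpNorm' (fun x => (N + ε)⁻¹ * f x) p μ ≤ 1 := by
      rw [eLpNorm'_const_mul f hc hp, mul_comm, ← div_eq_mul_inv]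
      exact ENNReal.div_le_of_le_mul (by rw [one_mul]; exact le_self_add)
    have hMcf := eLpNorm'_maximalFn_le_maximalOpNorm hw hp hcf
    rw [funext (maximalFn_const_mul f hc), eLpNorm'_const_mul _ hc hp, mul_comm,
      ← div_eq_mul_inv] at hMcf
    exact (ENNReal.div_le_iff hNε (ENNReal.add_ne_top.2 ⟨hf, hεt⟩)).1 hMcf
  have hlim : Tendsto (fun ε => C * (N + ε)) (𝓝[>] 0) (𝓝 (C * N)) := by
    refine ENNReal.Tendsto.const_mul ?_ (Or.inr hM)
    exact ((continuous_const.add continuous_id).tendsto' 0 N (add_zero N)).mono_left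
      nhdsWithin_le_nhds
  refine ge_of_tendsto hlim ?_
  filter_upwards [Ioo_mem_nhdsGT zero_lt_one] with ε hεI
  exact hε ε hεI.1 (hεI.2.trans ENNReal.one_lt_top).ne

theorem eLpNorm'_iterate_maximalFn_le (hw : IsWeight w) (hp : 0 < p)
    (hM : maximalOpNorm p w ≠ ∞) {f : (Fin n → ℝ) → ℝ≥0∞}
    (hf : eLpNorm' f p (volume.withDensity w) ≠ ∞) (k : ℕ) :
    eLpNorm' (maximalFn^[k] f) p (volume.withDensity w) ≤
      maximalOpNorm p w ^ k * eLpNorm' f p (volume.withDensity w) := by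
  induction k with
  | zero => simp
  | succ k ih =>
    have hk : eLpNorm' (maximalFn^[k] f) p (volume.withDensity w) ≠ ∞ :=
      (ih.trans_lt (ENNReal.mul_lt_top (ENNReal.pow_lt_top hM.lt_top) hf.lt_top)).ne
    rw [Function.iterate_succ_apply']
    calc _ ≤ maximalOpNorm p w * eLpNorm' (maximalFn^[k] f) p (volume.withDensity w) :=
          eLpNorm'_maximalFn_le hw hp hM hk
      _ ≤ maximalOpNorm p w * (maximalOpNorm p w ^ k * eLpNorm' f p (volume.withDensity w)) := by
          gcongr
      _ = _ := by ring

/-- Test function: `f = 𝟙_Q w^(-1/p)` has `f^p w ≤ 𝟙_Q`, and `Mf` is positive on `Q`. -/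
theorem maximalOpNorm_ne_zero (hw : IsWeight w) (hp : 0 < p) : maximalOpNorm p w ≠ 0 := by
  intro hM0
  set μ := volume.withDensity w
  set Q : Set (Fin n → ℝ) := closedBall 0 1
  have hQ : IsCube Q := isCube_closedBall 0 one_pos
  set f := Q.indicator fun x => w x ^ (-(1 / p))
  have hfm : Measurable f := (hw.1.pow_const _).indicator hQ.measurableSet
  have hf : eLpNorm' f p μ ≠ ∞ := by
    refine hw.eLpNorm'_withDensity (p := p) f ▸
      ENNReal.rpow_ne_top_of_nonneg (by positivity) (ne_top_of_le_ne_top hQ.volume_ne_top ?_)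
    calc ∫⁻ x, f x ^ p * w x ≤ ∫⁻ x, Q.indicator 1 x := lintegral_mono fun x => by
          by_cases hx : x ∈ Q
          · simp only [f, indicator_of_mem hx, Pi.one_apply, ← ENNReal.rpow_mul,
              neg_mul, one_div_mul_cancel hp.ne', ENNReal.rpow_neg_one, ENNReal.inv_mul_le_one]
          · simp [f, hx, ENNReal.zero_rpow_of_pos hp]
      _ = volume Q := lintegral_indicator_one hQ.measurableSet
  have hMf : eLpNorm' (maximalFn f) p μ = 0 :=
    le_antisymm ((eLpNorm'_maximalFn_le hw hp (hM0 ▸ ENNReal.zero_ne_top) hf).trans_eq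
      (by rw [hM0, zero_mul])) zero_le
  have hint : ∫⁻ x, maximalFn f x ^ p * w x = 0 := by
    rwa [hw.eLpNorm'_withDensity, ENNReal.rpow_eq_zero_iff_of_pos (by positivity)] at hMf
  have ha : 0 < avgE Q f := by
    refine ENNReal.div_pos (setLIntegral_pos_of_ae_pos hfm hQ.measurableSet
      hQ.volume_pos.ne' ?_).ne' hQ.volume_ne_top
    filter_upwards [hw.2] with x hx hxQ
    simpa [f, hxQ] using ENNReal.rpow_pos hx.1 hx.2.ne
  have hwQ : 0 < ∫⁻ x in Q, w x :=
    setLIntegral_pos_of_ae_pos hw.1 hQ.measurableSet hQ.volume_pos.ne'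
      (hw.2.mono fun x hx _ => hx.1)
  have hpos : 0 < avgE Q f ^ p * ∫⁻ x in Q, w x :=
    ENNReal.mul_pos (ENNReal.rpow_pos_of_nonneg ha hp.le).ne' hwQ.ne'
  refine hpos.not_ge ?_
  calc avgE Q f ^ p * ∫⁻ x in Q, w x = ∫⁻ x in Q, avgE Q f ^ p * w x :=
        (lintegral_const_mul _ hw.1).symm
    _ ≤ ∫⁻ x in Q, maximalFn f x ^ p * w x :=
        setLIntegral_mono ((measurable_maximalFn f).pow_const p |>.mul hw.1) fun x hx => by
          gcongr
          exact avgE_le_maximalFn f hQ hx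
    _ ≤ ∫⁻ x, maximalFn f x ^ p * w x := setLIntegral_le_lintegral _ _
    _ = 0 := hint

end OperatorNorm

section RubioDeFrancia

variable {n : ℕ}

def rubioDeFrancia (c : ℝ≥0∞) (h : (Fin n → ℝ) → ℝ≥0∞) (x : Fin n → ℝ) : ℝ≥0∞ :=
  ∑' k : ℕ, c ^ k * maximalFn^[k] h x

theorem rubioDeFrancia_eq_add (c : ℝ≥0∞) (h : (Fin n → ℝ) → ℝ≥0∞) (x : Fin n → ℝ) :
    rubioDeFrancia c h x = h x + ∑' k : ℕ, c ^ (k + 1) * maximalFn^[k + 1] h x := by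
  rw [rubioDeFrancia, tsum_eq_zero_add' ENNReal.summable, pow_zero, one_mul,
    Function.iterate_zero_apply]

theorem le_rubioDeFrancia (c : ℝ≥0∞) (h : (Fin n → ℝ) → ℝ≥0∞) (x : Fin n → ℝ) :
    h x ≤ rubioDeFrancia c h x :=
  (rubioDeFrancia_eq_add c h x).symm ▸ le_self_add

theorem measurable_iterate_succ_maximalFn (h : (Fin n → ℝ) → ℝ≥0∞) (k : ℕ) :
    Measurable (maximalFn^[k + 1] h) := by
  rw [Function.iterate_succ']
  exact measurable_maximalFn _

theorem maximalFn_rubioDeFrancia_le {c : ℝ≥0∞} (hc0 : c ≠ 0) (hc : c ≠ ∞)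
    (h : (Fin n → ℝ) → ℝ≥0∞) (x : Fin n → ℝ) :
    maximalFn (rubioDeFrancia c h) x ≤ c⁻¹ * rubioDeFrancia c h x := by
  have hg : ∀ k : ℕ, Measurable fun y => c ^ (k + 1) * maximalFn^[k + 1] h y := fun k =>
    (measurable_iterate_succ_maximalFn h k).const_mul _
  calc maximalFn (rubioDeFrancia c h) x
      = maximalFn (fun y => h y + ∑' k : ℕ, c ^ (k + 1) * maximalFn^[k + 1] h y) x := by
        rw [funext (rubioDeFrancia_eq_add c h)]
    _ ≤ maximalFn h x + ∑' k : ℕ, maximalFn (fun y => c ^ (k + 1) * maximalFn^[k + 1] h y) x :=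
        (maximalFn_add_le h (Measurable.tsum hg) x).trans
          (add_le_add_right (maximalFn_tsum_le hg x) _)
    _ = ∑' k : ℕ, c ^ k * maximalFn^[k + 1] h x := by
        rw [tsum_eq_zero_add' (f := fun k => c ^ k * maximalFn^[k + 1] h x) ENNReal.summable]
        simp only [maximalFn_const_mul _ (ENNReal.pow_ne_top hc), ← Function.iterate_succ_apply'
          maximalFn, pow_zero, one_mul, zero_add, Function.iterate_one]
    _ = c⁻¹ * ∑' k : ℕ, c ^ (k + 1) * maximalFn^[k + 1] h x := by
        rw [← ENNReal.tsum_mul_left]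
        congr 1 with k
        rw [pow_succ', ← mul_assoc, ← mul_assoc, ENNReal.inv_mul_cancel hc0 hc, one_mul]
    _ ≤ c⁻¹ * rubioDeFrancia c h x := by
        rw [rubioDeFrancia_eq_add]
        gcongr
        exact le_add_self

theorem eLpNorm'_rubioDeFrancia_le {p : ℝ} {w : (Fin n → ℝ) → ℝ≥0∞} (hw : IsWeight w)
    (hp : 1 ≤ p) (hM : maximalOpNorm p w ≠ ∞) {c : ℝ≥0∞} (hc : c ≠ ∞)
    {h : (Fin n → ℝ) → ℝ≥0∞} (hh : eLpNorm' h p (volume.withDensity w) ≠ ∞) :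
    eLpNorm' (rubioDeFrancia c h) p (volume.withDensity w) ≤
      (1 - c * maximalOpNorm p w)⁻¹ * eLpNorm' h p (volume.withDensity w) := by
  have hp0 : 0 < p := one_pos.trans_le hp
  set μ := volume.withDensity w
  have hg : ∀ k : ℕ, Measurable fun y => c ^ (k + 1) * maximalFn^[k + 1] h y := fun k =>
    (measurable_iterate_succ_maximalFn h k).const_mul _
  calc eLpNorm' (rubioDeFrancia c h) p μ
      = eLpNorm' (fun y => h y + ∑' k : ℕ, c ^ (k + 1) * maximalFn^[k + 1] h y) p μ := by
        rw [funext (rubioDeFrancia_eq_add c h)]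
    _ ≤ eLpNorm' h p μ + ∑' k : ℕ,
          eLpNorm' (fun y => c ^ (k + 1) * maximalFn^[k + 1] h y) p μ :=
        (eLpNorm'_add_le_of_measurable_right h (Measurable.tsum hg) hp).trans
          (add_le_add_right (eLpNorm'_tsum_le hg hp) _)
    _ ≤ eLpNorm' h p μ + ∑' k : ℕ, (c * maximalOpNorm p w) ^ (k + 1) * eLpNorm' h p μ := by
        gcongr with k
        rw [eLpNorm'_const_mul _ (ENNReal.pow_ne_top hc) hp0, mul_pow, mul_assoc]
        gcongr
        exact eLpNorm'_iterate_maximalFn_le hw hp0 hM hh (k + 1)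
    _ = ∑' k : ℕ, (c * maximalOpNorm p w) ^ k * eLpNorm' h p μ := by
        rw [tsum_eq_zero_add' (f := fun k => (c * maximalOpNorm p w) ^ k * eLpNorm' h p μ)
          ENNReal.summable, pow_zero, one_mul]
    _ = (1 - c * maximalOpNorm p w)⁻¹ * eLpNorm' h p μ := by
        rw [ENNReal.tsum_mul_right, ENNReal.tsum_geometric]

end RubioDeFrancia

theorem statement11_general {n : ℕ} (p : ℝ) (hp : 1 < p)
    (w : (Fin n → ℝ) → ℝ≥0∞) (hw : IsWeight w) :
    ∃ R : ((Fin n → ℝ) → ℝ≥0∞) → ((Fin n → ℝ) → ℝ≥0∞),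
      ∀ h : (Fin n → ℝ) → ℝ≥0∞, (∫⁻ x, h x ^ p * w x) ≠ ∞ →
        (∀ᵐ x ∂(volume : Measure (Fin n → ℝ)), h x ≤ R h x) ∧
        (∫⁻ x, R h x ^ p * w x) ^ (1/p) ≤ 2 * (∫⁻ x, h x ^ p * w x) ^ (1/p) ∧
        a1Const (R h) ≤ 2 * maximalOpNorm p w := by
  set C := maximalOpNorm p w
  rcases eq_or_ne C ∞ with hC | hC
  · refine ⟨id, fun h _ =>
      ⟨.of_forall fun x => le_rfl, le_mul_of_one_le_left zero_le one_le_two, ?_⟩⟩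
    rw [hC, ENNReal.mul_top two_ne_zero]
    exact le_top
  have hC0 : C ≠ 0 := maximalOpNorm_ne_zero hw (one_pos.trans hp)
  have hc0 : (2 * C)⁻¹ ≠ 0 := ENNReal.inv_ne_zero.2 (ENNReal.mul_ne_top ENNReal.ofNat_ne_top hC)
  have hc : (2 * C)⁻¹ ≠ ∞ := ENNReal.inv_ne_top.2 (mul_ne_zero two_ne_zero hC0)
  have hcC : (2 * C)⁻¹ * C = 2⁻¹ := by
    rw [ENNReal.mul_inv (.inl two_ne_zero) (.inl ENNReal.ofNat_ne_top), mul_assoc,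
      ENNReal.inv_mul_cancel hC0 hC, mul_one]
  refine ⟨rubioDeFrancia (2 * C)⁻¹, fun h hh => ⟨.of_forall (le_rubioDeFrancia _ h), ?_, ?_⟩⟩
  · have hh' := ENNReal.rpow_ne_top_of_nonneg (one_div_pos.2 (one_pos.trans hp)).le hh
    rw [← hw.eLpNorm'_withDensity] at hh'
    rw [← hw.eLpNorm'_withDensity, ← hw.eLpNorm'_withDensity]
    calc _ ≤ (1 - (2 * C)⁻¹ * C)⁻¹ * eLpNorm' h p (volume.withDensity w) :=
          eLpNorm'_rubioDeFrancia_le hw hp.le hC hc hh'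
      _ = 2 * eLpNorm' h p (volume.withDensity w) := by
          rw [hcC, ENNReal.one_sub_inv_two, inv_inv]
  · refine a1Const_le_of_maximalFn_le fun x => ?_
    simpa only [inv_inv] using maximalFn_rubioDeFrancia_le hc0 hc h x

/-- Rubio de Francia iteration algorithm: for `p ∈ (1,∞)` and `w ∈ A_p`
there is an operator `ℛ` with `h ≤ ℛh`, `‖ℛh‖_{L^p(w)} ≤ 2‖h‖_{L^p(w)}` and
`ℛh ∈ A_1` with `[ℛh]_{A_1} ≤ 2‖M‖_{L^p(w)→L^p(w)}`, for every nonnegative `h ∈ L^p(w)`. -/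
theorem statement11 {n : ℕ} (p : ℝ) (hp : 1 < p)
    (w : (Fin n → ℝ) → ℝ≥0∞) (hw : IsWeight w) (hA : apConst p w ≠ ∞) :
    ∃ R : ((Fin n → ℝ) → ℝ≥0∞) → ((Fin n → ℝ) → ℝ≥0∞),
      ∀ h : (Fin n → ℝ) → ℝ≥0∞, (∫⁻ x, h x ^ p * w x) ≠ ∞ →
        (∀ᵐ x ∂(volume : Measure (Fin n → ℝ)), h x ≤ R h x) ∧
        (∫⁻ x, R h x ^ p * w x) ^ (1/p) ≤ 2 * (∫⁻ x, h x ^ p * w x) ^ (1/p) ∧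
        a1Const (R h) ≤ 2 * maximalOpNorm p w :=
  statement11_general p hp w hw
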